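/- arXiv:math/0406029 — 2 statements merged into one kernel-verified Lean document; each statement's English description precedes it below -/
import Mathlib

section
/- For natural numbers q, k, ℓ with ℓ ≤ k ≤ q, the double sum Σ_{j=ℓ}^{k} Σ_{i=0}^{q-k} C(k+i-j, k-j) · C(q-k-i+j-ℓ, j-ℓ) equals (k-ℓ+1) · C(q-ℓ+1, k-ℓ+1). -/
/-!
For fixed `j`, the inner sum is an instance of the upper-index Vandermonde identity
`∑_{i + i' = n} C(a + i, a) C(b + i', b) = C(a + b + 1 + n, a + b + 1)` with `a = k - j`,
`b = j - ℓ`, `n = q - k`; its value `C(q - ℓ + 1, k - ℓ + 1)` does not depend on `j`, so the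
outer sum just multiplies it by the number `k - ℓ + 1` of terms.
-/

open Finset

/-- Upper negation `C(-(m + 1), k) = (-1)^k C(m + k, m)` reduces this to the Chu–Vandermonde
identity in the binomial ring `ℤ` at the arguments `-(a + 1)` and `-(b + 1)`. -/
theorem Nat.sum_antidiagonal_add_choose_mul_add_choose (a b n : ℕ) :
    ∑ ij ∈ antidiagonal n, (a + ij.1).choose a * (b + ij.2).choose b
      = (a + b + 1 + n).choose (a + b + 1) := by
  have neg_choose (m k : ℕ) :
      Ring.choose (-((m : ℤ) + 1)) k = (k : ℤ).negOnePow • ((m + k).choose m : ℤ) := by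
    rw [Ring.choose_neg, show (m : ℤ) + 1 + k - 1 = ((m + k : ℕ) : ℤ) by push_cast; ring,
      Ring.choose_natCast, Nat.choose_symm_add]
  have vandermonde := Ring.add_choose_eq n (Commute.all (-((a : ℤ) + 1)) (-((b : ℤ) + 1)))
  rw [← neg_add, show (a : ℤ) + 1 + (b + 1) = ((a + b + 1 : ℕ) : ℤ) + 1 by push_cast; ring,
    neg_choose] at vandermonde
  have sign_factor : ∀ ij ∈ antidiagonal n,
      Ring.choose (-((a : ℤ) + 1)) ij.1 * Ring.choose (-((b : ℤ) + 1)) ij.2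
        = (n : ℤ).negOnePow • (((a + ij.1).choose a * (b + ij.2).choose b : ℕ) : ℤ) := by
    intro ij hij
    rw [neg_choose, neg_choose, smul_mul_smul_comm, ← Int.negOnePow_add, ← Nat.cast_add,
      mem_antidiagonal.1 hij, Nat.cast_mul]
  rw [sum_congr rfl sign_factor, ← smul_sum, smul_left_cancel_iff] at vandermonde
  exact_mod_cast vandermonde.symm

/-- `Σ_{j=ℓ}^{k} Σ_{i=0}^{q-k} C(k+i-j, k-j)·C(q-k-i+j-ℓ, j-ℓ) = (k-ℓ+1)·C(q-ℓ+1, k-ℓ+1)`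
for `ℓ ≤ k ≤ q`. -/
theorem double_binomial_sum (q k ℓ : ℕ) (hlk : ℓ ≤ k) (hkq : k ≤ q) :
    ∑ j ∈ Finset.Icc ℓ k, ∑ i ∈ Finset.range (q - k + 1),
        Nat.choose (k + i - j) (k - j) * Nat.choose (q - k - i + j - ℓ) (j - ℓ)
      = (k - ℓ + 1) * Nat.choose (q - ℓ + 1) (k - ℓ + 1) := by
  have inner_sum : ∀ j ∈ Icc ℓ k, ∑ i ∈ range (q - k + 1),
      (k + i - j).choose (k - j) * (q - k - i + j - ℓ).choose (j - ℓ)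
        = (q - ℓ + 1).choose (k - ℓ + 1) := by
    intro j hj
    obtain ⟨hℓj, hjk⟩ := mem_Icc.1 hj
    have h := Nat.sum_antidiagonal_add_choose_mul_add_choose (k - j) (j - ℓ) (q - k)
    rw [Nat.sum_antidiagonal_eq_sum_range_succ_mk] at h
    convert h using 1
    · refine sum_congr rfl fun i hi => ?_
      rw [mem_range] at hi
      congr 2 <;> omega
    · congr 1 <;> omega
  rw [sum_congr rfl inner_sum, sum_const, Nat.card_Icc, smul_eq_mul, Nat.sub_add_comm hlk]
end

section
/- For natural numbers q, t with 1 ≤ t ≤ q, and integers n, d, the sum Σ_{j=t}^{q} j·(-1)^{j-1}·d^{j-t}·C(n+1, q-j)·C(j-1, j-t) equals -t·α(q, q-t), where α(q, q-t) = (-1)^q Σ_{ℓ=0}^{q-t} (-1)^ℓ d^{q-t-ℓ} C(q-ℓ, q-t-ℓ) C(n+1, ℓ). -/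
/-! After the substitution `ℓ = q - j` the identity holds term by term: the factor `j` is
absorbed by `j C(j-1, j-t) = t C(j, j-t)`, and the signs match because
`(-1)^q (-1)^(q-j) = (-1)^j` and `j (-1)^(j-1) = -j (-1)^j`. -/

open Finset

theorem Finset.sum_Icc_eq_sum_range_sub {M : Type*} [AddCommMonoid M] (f : ℕ → M) {t q : ℕ}
    (htq : t ≤ q) : ∑ j ∈ Icc t q, f j = ∑ ℓ ∈ range (q - t + 1), f (q - ℓ) := by
  rw [range_eq_Ico, sum_Ico_reflect f 0 (by omega), ← Ico_add_one_right_eq_Icc]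
  congr 2
  omega

theorem Nat.mul_choose_sub_one_sub {t j : ℕ} (htj : t ≤ j) :
    j * (j - 1).choose (j - t) = t * j.choose (j - t) := by
  rcases j with _ | m
  · simp [Nat.le_zero.mp htj]
  have := Nat.choose_mul_succ_eq m (m + 1 - t)
  rw [show m + 1 - (m + 1 - t) = t by omega] at this
  simpa [mul_comm] using this

theorem div_coefficient_sum_general (n q t : ℕ) (d : ℤ) (htq : t ≤ q) :
    ∑ j ∈ Finset.Icc t q,
        (j : ℤ) * (-1 : ℤ) ^ (j - 1) * d ^ (j - t) * (Nat.choose (n + 1) (q - j) : ℤ) *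
          (Nat.choose (j - 1) (j - t) : ℤ)
      = -(t : ℤ) * ((-1 : ℤ) ^ q * ∑ ℓ ∈ Finset.range (q - t + 1),
          (-1 : ℤ) ^ ℓ * d ^ (q - t - ℓ) * (Nat.choose (q - ℓ) (q - t - ℓ) : ℤ) *
            (Nat.choose (n + 1) ℓ : ℤ)) := by
  rw [sum_Icc_eq_sum_range_sub _ htq, mul_sum, mul_sum]
  refine sum_congr rfl fun ℓ hℓ => ?_
  obtain ⟨j, rfl, htj⟩ : ∃ j, q = j + ℓ ∧ t ≤ j := ⟨q - ℓ, by grind, by grind⟩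
  rw [show j + ℓ - ℓ = j by omega, show j + ℓ - j = ℓ by omega,
    show j + ℓ - t - ℓ = j - t by omega]
  have hchoose : (j : ℤ) * ((j - 1).choose (j - t) : ℤ) = t * (j.choose (j - t) : ℤ) := by
    exact_mod_cast Nat.mul_choose_sub_one_sub htj
  have hsign : (j : ℤ) * (-1) ^ (j - 1) = -(j * (-1) ^ j) := by
    rcases j with _ | m
    · simp
    · simp [pow_succ]
  have hsq : (-1 : ℤ) ^ (2 * ℓ) = 1 := (even_two_mul ℓ).neg_one_pow
  linear_combination d ^ (j - t) * ((n + 1).choose ℓ : ℤ) *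
    (((j - 1).choose (j - t) : ℤ) * hsign - (-1) ^ j * hchoose
      + t * (j.choose (j - t) : ℤ) * (-1) ^ j * hsq)

/-- `Σ_{j=t}^{q} j(-1)^{j-1} d^{j-t} C(n+1,q-j) C(j-1,j-t) = -t·α(q, q-t)`. -/
theorem div_coefficient_sum (n q t : ℕ) (d : ℤ) (ht1 : 1 ≤ t) (htq : t ≤ q) :
    ∑ j ∈ Finset.Icc t q,
        (j : ℤ) * (-1 : ℤ) ^ (j - 1) * d ^ (j - t) * (Nat.choose (n + 1) (q - j) : ℤ) *
          (Nat.choose (j - 1) (j - t) : ℤ)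
      = -(t : ℤ) * ((-1 : ℤ) ^ q * ∑ ℓ ∈ Finset.range (q - t + 1),
          (-1 : ℤ) ^ ℓ * d ^ (q - t - ℓ) * (Nat.choose (q - ℓ) (q - t - ℓ) : ℤ) *
            (Nat.choose (n + 1) ℓ : ℤ)) :=
  div_coefficient_sum_general n q t d htq
end
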